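/- (Combing and cabling commute, cable far from the crossing) In the Artin braid group B_{m+n}, for every 1 ≤ k ≤ m−1, every 1 ≤ i ≤ m with i ≠ k and i ≠ k+1, and every 1 ≤ q ≤ n, the fixed crossing Σ_k commutes with the positive looping of a q-strand cable around the i-th fixed strand: Σ_k · ( ∏_{l=0}^{q−1} λ_l a_i λ_l^{−1} ) = ( ∏_{l=0}^{q−1} λ_l a_i λ_l^{−1} ) · Σ_k, products taken left to right in increasing l. -/

import Mathlib

/-!
Conjugating by `λ_l` and by the part `σ_m ⋯ σ_{k+2}` of the word defining `a_i` only involves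
generators far from `σ_k`. If `i ≥ k + 2` the whole loop is such a word. If `i < k`, the word
`σ_m ⋯ σ_{i+1}` passes through `σ_{k+1} σ_k`, and the braid relation gives
`(σ_{k+1} σ_k)⁻¹ σ_k (σ_{k+1} σ_k) = σ_{k+1}`; so it suffices that `σ_{k+1}` commutes with the
rest of the conjugate, which only involves `σ_1, …, σ_{k-1}`.
-/

/-- Defining relations of the Artin braid group on `N` strands, with generators
indexed by `Fin (N-1)` (index `s : Fin (N-1)` corresponds to the 1-based generator
`σ_{s+1}`): the far commutation relations and the braid relations. -/
def braidRels (N : ℕ) : Set (FreeGroup (Fin (N - 1))) :=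
  {x | ∃ s t : Fin (N - 1), (s : ℕ) + 2 ≤ (t : ℕ) ∧
      x = FreeGroup.of s * FreeGroup.of t * (FreeGroup.of s)⁻¹ * (FreeGroup.of t)⁻¹} ∪
  {x | ∃ s t : Fin (N - 1), (s : ℕ) + 1 = (t : ℕ) ∧
      x = FreeGroup.of s * FreeGroup.of t * FreeGroup.of s *
          (FreeGroup.of t)⁻¹ * (FreeGroup.of s)⁻¹ * (FreeGroup.of t)⁻¹}

/-- The Artin braid group on `N` strands. -/
abbrev BraidGroup (N : ℕ) := PresentedGroup (braidRels N)

/-- The generator `σ_s` (1-based, `1 ≤ s ≤ N-1`); junk value `1` out of range. -/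
def sig (N s : ℕ) : BraidGroup N :=
  if h : 1 ≤ s ∧ s ≤ N - 1 then PresentedGroup.of ⟨s - 1, by omega⟩ else 1

/-- The loop element `a_i = σ_m σ_{m-1} ⋯ σ_{i+1} · σ_i² · σ_{i+1}⁻¹ ⋯ σ_m⁻¹`
(so `a_m = σ_m²`) in the braid group on `N` strands, `m` of which are fixed. -/
def loop (N m i : ℕ) : BraidGroup N :=
  (((List.range (m - i)).map (fun l => sig N (m - l))).prod) * (sig N i) ^ 2 *
    (((List.range (m - i)).map (fun l => sig N (m - l))).prod)⁻¹

/-- `λ_l := σ_{m+l} σ_{m+l-1} ⋯ σ_{m+1}`, with `λ_0 := 1`. -/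
def lam (N m l : ℕ) : BraidGroup N :=
  ((List.range l).map (fun t => sig N (m + l - t))).prod

/-- The positive looping `∏_{l=0}^{q-1} λ_l a_j λ_l⁻¹` of a `q`-strand cable of
moving strands around the `j`-th fixed strand. -/
def cable (N m j q : ℕ) : BraidGroup N :=
  ((List.range q).map (fun l => lam N m l * loop N m j * (lam N m l)⁻¹)).prod

theorem Commute.conj_of_commute {G : Type*} [Group G] {a p y : G}
    (hp : Commute a p) (hy : Commute a y) : Commute a (p * y * p⁻¹) :=
  (hp.mul_right hy).mul_right hp.inv_right

theorem commute_conj_of_braid {G : Type*} [Group G] {a b x : G}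
    (hab : a * b * a = b * a * b) (hbx : Commute b x) :
    Commute a (b * a * x * (b * a)⁻¹) := by
  have ha : b * a * b * (b * a)⁻¹ = a := by
    rw [mul_inv_eq_iff_eq_mul, ← hab, mul_assoc]
  simpa only [ha] using hbx.conj (b * a)

section Generators

variable {N : ℕ}

theorem sig_eq_of {s : ℕ} (h1 : 1 ≤ s) (h2 : s + 1 ≤ N) :
    sig N s = PresentedGroup.of ⟨s - 1, by omega⟩ :=
  dif_pos ⟨h1, by omega⟩

theorem sig_zero : sig N 0 = 1 :=
  dif_neg (by omega)

theorem sig_eq_one_of_le {s : ℕ} (h : N ≤ s) : sig N s = 1 :=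
  dif_neg (by omega)

theorem commute_sig_of_add_two_le {s t : ℕ} (h : s + 2 ≤ t) :
    Commute (sig N s) (sig N t) := by
  rcases Nat.eq_zero_or_pos s with rfl | hs
  · simp [sig_zero]
  rcases Nat.lt_or_ge t N with ht | ht
  · rw [sig_eq_of hs (by omega), sig_eq_of (by omega) ht]
    have hrel := PresentedGroup.mk_eq_mk_of_mul_inv_mem (rels := braidRels N)
      (x := .of ⟨s - 1, by omega⟩ * .of ⟨t - 1, by omega⟩)
      (y := .of ⟨t - 1, by omega⟩ * .of ⟨s - 1, by omega⟩)
      (by rw [mul_inv_rev, ← mul_assoc]; exact Or.inl ⟨_, _, by simp only; omega, rfl⟩)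
    simp only [map_mul] at hrel
    exact hrel
  · simp [sig_eq_one_of_le ht]

theorem sig_mul_sig_succ_mul_sig {s : ℕ} (h1 : 1 ≤ s) (h2 : s + 2 ≤ N) :
    sig N s * sig N (s + 1) * sig N s = sig N (s + 1) * sig N s * sig N (s + 1) := by
  rw [sig_eq_of h1 (by omega), sig_eq_of (by omega) h2]
  have hrel := PresentedGroup.mk_eq_mk_of_mul_inv_mem (rels := braidRels N)
    (x := .of ⟨s - 1, by omega⟩ * .of ⟨s + 1 - 1, by omega⟩ * .of ⟨s - 1, by omega⟩)
    (y := .of ⟨s + 1 - 1, by omega⟩ * .of ⟨s - 1, by omega⟩ * .of ⟨s + 1 - 1, by omega⟩)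
    (by simp only [mul_inv_rev, ← mul_assoc]; exact Or.inr ⟨_, _, by simp only; omega, rfl⟩)
  simp only [map_mul] at hrel
  exact hrel

end Generators

def sigDesc (N a j : ℕ) : BraidGroup N :=
  ((List.range j).map fun l => sig N (a - l)).prod

section Descending

variable {N : ℕ}

theorem loop_eq_sigDesc_conj (m i : ℕ) :
    loop N m i = sigDesc N m (m - i) * sig N i ^ 2 * (sigDesc N m (m - i))⁻¹ :=
  rfl

theorem lam_eq_sigDesc (m l : ℕ) : lam N m l = sigDesc N (m + l) l :=
  rfl

theorem sigDesc_add (a j₁ j₂ : ℕ) :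
    sigDesc N a (j₁ + j₂) = sigDesc N a j₁ * sigDesc N (a - j₁) j₂ := by
  simp only [sigDesc, List.range_add, List.map_append, List.map_map, List.prod_append,
    Function.comp_def, Nat.sub_sub]

theorem sigDesc_two (a : ℕ) : sigDesc N (a + 1) 2 = sig N (a + 1) * sig N a := by
  simp [sigDesc, List.range_succ]

theorem Commute.sigDesc_right {x : BraidGroup N} {a j : ℕ}
    (h : ∀ l < j, Commute x (sig N (a - l))) : Commute x (sigDesc N a j) :=
  Commute.list_prod_right _ _ fun y hy => by
    obtain ⟨l, hl, rfl⟩ := List.mem_map.mp hy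
    exact h l (List.mem_range.mp hl)

theorem commute_sig_sigDesc_of_add_lt {k a j : ℕ} (h : k + j < a) :
    Commute (sig N k) (sigDesc N a j) :=
  Commute.sigDesc_right fun _ _ => commute_sig_of_add_two_le (by omega)

theorem commute_sig_sigDesc_of_add_two_le {k a j : ℕ} (h : a + 2 ≤ k) :
    Commute (sig N k) (sigDesc N a j) :=
  Commute.sigDesc_right fun _ _ => (commute_sig_of_add_two_le (by omega)).symm

end Descending

section Loops

variable {N m k i : ℕ}

theorem commute_sig_loop_of_add_two_le (hkm : k < m) (hki : k + 2 ≤ i) :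
    Commute (sig N k) (loop N m i) :=
  (commute_sig_sigDesc_of_add_lt (by omega)).conj_of_commute
    ((commute_sig_of_add_two_le hki).pow_right 2)

theorem commute_sig_loop_of_lt (hkm : k < m) (hkN : k + 2 ≤ N) (hik : i < k) :
    Commute (sig N k) (loop N m i) := by
  set P := sigDesc N m (m - (k + 1))
  set Q := sigDesc N (k - 1) (k - 1 - i)
  have hword : sigDesc N m (m - i) = P * (sig N (k + 1) * sig N k) * Q := by
    rw [show m - i = (m - (k + 1)) + (2 + (k - 1 - i)) by omega, sigDesc_add, sigDesc_add,
      show m - (m - (k + 1)) = (k - 1 + 1) + 1 by omega, sigDesc_two,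
      show k - 1 + 1 + 1 - 2 = k - 1 by omega, Nat.sub_add_cancel (by omega : 1 ≤ k)]
    simp only [P, Q, mul_assoc]
  have hloop : loop N m i = P * (sig N (k + 1) * sig N k * (Q * sig N i ^ 2 * Q⁻¹) *
      (sig N (k + 1) * sig N k)⁻¹) * P⁻¹ := by
    rw [loop_eq_sigDesc_conj, hword]
    group
  have hP : Commute (sig N k) P := commute_sig_sigDesc_of_add_lt (by omega)
  have hQ : Commute (sig N (k + 1)) (Q * sig N i ^ 2 * Q⁻¹) :=
    (commute_sig_sigDesc_of_add_two_le (by omega)).conj_of_commute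
      ((commute_sig_of_add_two_le (by omega)).symm.pow_right 2)
  rw [hloop]
  exact hP.conj_of_commute
    (commute_conj_of_braid (sig_mul_sig_succ_mul_sig (by omega) hkN) hQ)

theorem commute_sig_loop (hkm : k < m) (hkN : k + 2 ≤ N) (hik : i ≠ k) (hik1 : i ≠ k + 1) :
    Commute (sig N k) (loop N m i) := by
  rcases Nat.lt_or_gt_of_ne hik with hlt | hgt
  · exact commute_sig_loop_of_lt hkm hkN hlt
  · exact commute_sig_loop_of_add_two_le hkm (by omega)

theorem commute_sig_lam (hkm : k < m) (l : ℕ) : Commute (sig N k) (lam N m l) := by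
  rw [lam_eq_sigDesc]
  exact commute_sig_sigDesc_of_add_lt (by omega)

end Loops

theorem Commute.cable_right {N m j q : ℕ} {x : BraidGroup N}
    (hlam : ∀ l, Commute x (lam N m l)) (hloop : Commute x (loop N m j)) :
    Commute x (cable N m j q) :=
  Commute.list_prod_right _ _ fun y hy => by
    obtain ⟨l, -, rfl⟩ := List.mem_map.mp hy
    exact (hlam l).conj_of_commute hloop

theorem combing_cabling_commute_far_general (m n k i q : ℕ) (hn : 1 ≤ n)
    (hk1 : 1 ≤ k) (hk2 : k ≤ m - 1)
    (hik : i ≠ k) (hik1 : i ≠ k + 1) :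
    sig (m + n) k * cable (m + n) m i q =
      cable (m + n) m i q * sig (m + n) k :=
  Commute.cable_right (commute_sig_lam (by omega))
    (commute_sig_loop (by omega) (by omega) hik hik1)

/-- Combing and cabling commute when the cable is far from the crossing: `Σ_k`
commutes with the positive looping of a `q`-strand cable around the `i`-th
fixed strand when `i ≠ k, k+1`. -/
theorem combing_cabling_commute_far (m n k i q : ℕ) (hm : 2 ≤ m) (hn : 1 ≤ n)
    (hk1 : 1 ≤ k) (hk2 : k ≤ m - 1) (hi1 : 1 ≤ i) (hi2 : i ≤ m)
    (hik : i ≠ k) (hik1 : i ≠ k + 1) (hq1 : 1 ≤ q) (hq2 : q ≤ n) :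
    sig (m + n) k * cable (m + n) m i q =
      cable (m + n) m i q * sig (m + n) k :=
  combing_cabling_commute_far_general m n k i q hn hk1 hk2 hik hik1
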